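/- Let G be a balanced complex orthogonal design (BCOD) with p rows, in B_i form for some i. Then the p rows of G can be partitioned into p/2 pairs; in particular every row of G belongs to a pair. -/

import Mathlib

open Matrix

/-- A formal entry of a complex orthogonal design: either `0`, or `± z_i`, or `± z_i^*`.
Here `sign = true` means sign `+1`, and `conj = true` means the conjugated symbol `z_i^*`. -/
inductive CODEntry (k : ℕ) : Type where
  | zero : CODEntry k
  | var (sign : Bool) (conj : Bool) (idx : Fin k) : CODEntry k
deriving DecidableEq

namespace CODEntry

variable {k k' : ℕ}

/-- Evaluate a formal entry at an assignment of complex values to the indeterminates. -/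
def eval (z : Fin k → ℂ) : CODEntry k → ℂ
  | zero => 0
  | var s c i => (if s then (1 : ℂ) else -1) * (if c then (starRingEnd ℂ) (z i) else z i)

/-- Formal negation of an entry. -/
def neg : CODEntry k → CODEntry k
  | zero => zero
  | var s c i => var (!s) c i

/-- Formal conjugation of an entry (with `0^* = 0`). -/
def conj : CODEntry k → CODEntry k
  | zero => zero
  | var s c i => var s (!c) i

/-- Optionally negate an entry. -/
def negIf (b : Bool) (e : CODEntry k) : CODEntry k := if b then e.neg else e

/-- Rename variables according to a permutation of the indices. -/
def rename (σ : Equiv.Perm (Fin k)) : CODEntry k → CODEntry k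
  | zero => zero
  | var s c i => var s c (σ i)

/-- Negate all instances of the variable `z_j`. -/
def negVar (j : Fin k) : CODEntry k → CODEntry k
  | zero => zero
  | var s c i => if i = j then var (!s) c i else var s c i

/-- Conjugate all instances of the variable `z_j` (swap `z_j ↔ z_j^*`). -/
def conjVar (j : Fin k) : CODEntry k → CODEntry k
  | zero => zero
  | var s c i => if i = j then var s (!c) i else var s c i

/-- Transport an entry along a map of variable index sets. -/
def mapIdx (f : Fin k → Fin k') : CODEntry k → CODEntry k'
  | zero => zero
  | var s c i => var s c (f i)

/-- Whether a (nonzero) entry is a conjugated symbol `± z_i^*`. -/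
def isConj : CODEntry k → Bool
  | zero => false
  | var _ c _ => c

/-- The index of the variable occurring in an entry, if any. -/
def index : CODEntry k → Option (Fin k)
  | zero => none
  | var _ _ i => some i

end CODEntry

/-- `G` is a `[p, n, k]` complex orthogonal design (COD): for every assignment of complex
values to the indeterminates, `Gᴴ * G = (|z_1|² + … + |z_k|²) • I_n`. -/
def IsCOD {p n k : ℕ} (G : Matrix (Fin p) (Fin n) (CODEntry k)) : Prop :=
  ∀ z : Fin k → ℂ,
    (G.map (CODEntry.eval z))ᴴ * (G.map (CODEntry.eval z)) =
      ((∑ i, Complex.normSq (z i) : ℝ) : ℂ) • (1 : Matrix (Fin n) (Fin n) ℂ)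

/-- The equivalence operations on `[p, n, k]` CODs. -/
inductive EquivOp (p n k : ℕ) : Type where
  | rowPerm (σ : Equiv.Perm (Fin p))
  | rowNeg (r : Fin p)
  | colPerm (σ : Equiv.Perm (Fin n))
  | colNeg (c : Fin n)
  | varRename (σ : Equiv.Perm (Fin k))
  | varNeg (i : Fin k)
  | varConj (i : Fin k)

namespace EquivOp

variable {p n k : ℕ}

/-- Apply an equivalence operation to a matrix of formal entries. -/
def apply (G : Matrix (Fin p) (Fin n) (CODEntry k)) :
    EquivOp p n k → Matrix (Fin p) (Fin n) (CODEntry k)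
  | rowPerm σ => fun r c => G (σ r) c
  | rowNeg r₀ => fun r c => if r = r₀ then (G r c).neg else G r c
  | colPerm σ => fun r c => G r (σ c)
  | colNeg c₀ => fun r c => if c = c₀ then (G r c).neg else G r c
  | varRename σ => fun r c => (G r c).rename σ
  | varNeg i => fun r c => (G r c).negVar i
  | varConj i => fun r c => (G r c).conjVar i

/-- The operation is a column permutation. -/
def IsColPerm : EquivOp p n k → Prop
  | colPerm _ => True
  | _ => False

/-- The operation is a column negation. -/
def IsColNeg : EquivOp p n k → Prop
  | colNeg _ => True
  | _ => False

/-- The operation is a variable renaming. -/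
def IsVarRename : EquivOp p n k → Prop
  | varRename _ => True
  | _ => False

/-- Where each row of the original matrix is sent by the operation. -/
def rowMap : EquivOp p n k → Equiv.Perm (Fin p)
  | rowPerm σ => σ⁻¹
  | _ => 1

end EquivOp

/-- Apply a finite sequence of equivalence operations, in order. -/
def applyOps {p n k : ℕ} (G : Matrix (Fin p) (Fin n) (CODEntry k))
    (ops : List (EquivOp p n k)) : Matrix (Fin p) (Fin n) (CODEntry k) :=
  ops.foldl EquivOp.apply G

/-- Where each row of the original matrix is sent by a sequence of operations. -/
def opsRowMap {p n k : ℕ} (ops : List (EquivOp p n k)) : Equiv.Perm (Fin p) :=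
  ops.foldl (fun τ op => op.rowMap * τ) 1

/-- An operation on a COD with `m + m` columns is column-restricted if, in case it is a
column permutation, it is the transposition of columns `i` and `m + i` for some `i`. -/
def EquivOp.ColumnRestricted {p m k : ℕ} : EquivOp p (m + m) k → Prop
  | .colPerm σ => ∃ i : Fin m, σ = Equiv.swap (Fin.castAdd m i) (Fin.natAdd m i)
  | _ => True

/-- `G` contains the `B_i` form submatrix on the `2m` rows selected by the embedding `f`:
the block matrix `((z_i I_m, M), (−Mᴴ, z_i^* I_m))` where `M` is the top-right block. -/
def ContainsBFormWith {p m k : ℕ} (G : Matrix (Fin p) (Fin (m + m)) (CODEntry k))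
    (i : Fin k) (f : Fin (m + m) ↪ Fin p) : Prop :=
  (∀ r s : Fin m, G (f (Fin.castAdd m r)) (Fin.castAdd m s) =
      if r = s then CODEntry.var true false i else CODEntry.zero) ∧
  (∀ r s : Fin m, G (f (Fin.natAdd m r)) (Fin.natAdd m s) =
      if r = s then CODEntry.var true true i else CODEntry.zero) ∧
  (∀ r s : Fin m, G (f (Fin.natAdd m r)) (Fin.castAdd m s) =
      ((G (f (Fin.castAdd m s)) (Fin.natAdd m r)).conj).neg)

/-- As `ContainsBFormWith`, and moreover the top-right block `M` is (formally)
skew-symmetric: `Mᵀ = −M`. -/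
def ContainsSkewBFormWith {p m k : ℕ} (G : Matrix (Fin p) (Fin (m + m)) (CODEntry k))
    (i : Fin k) (f : Fin (m + m) ↪ Fin p) : Prop :=
  ContainsBFormWith G i f ∧
  ∀ r s : Fin m, G (f (Fin.castAdd m s)) (Fin.natAdd m r) =
    (G (f (Fin.castAdd m r)) (Fin.natAdd m s)).neg

/-- `G` is in `B_i` form: after equivalence operations excluding column permutations
(and not renaming variables), it contains the `B_i` form submatrix. -/
def InBForm {p m k : ℕ} (G : Matrix (Fin p) (Fin (m + m)) (CODEntry k)) (i : Fin k) : Prop :=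
  ∃ ops : List (EquivOp p (m + m) k),
    (∀ op ∈ ops, ¬ op.IsColPerm ∧ ¬ op.IsVarRename) ∧
    ∃ f, ContainsBFormWith (applyOps G ops) i f

/-- `G` is in `B_i` form with skew-symmetric block `M_i`. -/
def InSkewBForm {p m k : ℕ} (G : Matrix (Fin p) (Fin (m + m)) (CODEntry k)) (i : Fin k) : Prop :=
  ∃ ops : List (EquivOp p (m + m) k),
    (∀ op ∈ ops, ¬ op.IsColPerm ∧ ¬ op.IsVarRename) ∧
    ∃ f, ContainsSkewBFormWith (applyOps G ops) i f

/-- `G` is a balanced complex orthogonal design (BCOD) with `2m` columns: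
a COD in which every row has exactly `m` zero entries (hence `m` nonzero ones),
every row is conjugation-separated, and for each variable `z_j` it is in `B_j` form
with skew-symmetric block `M_j`. -/
def IsBCOD {p m k : ℕ} (G : Matrix (Fin p) (Fin (m + m)) (CODEntry k)) : Prop :=
  IsCOD G ∧
  (∀ r : Fin p, (Finset.univ.filter fun c => G r c = CODEntry.zero).card = m) ∧
  (∀ r : Fin p,
      (∀ c, G r c ≠ CODEntry.zero → (G r c).isConj = true) ∨
      (∀ c, G r c ≠ CODEntry.zero → (G r c).isConj = false)) ∧
  (∀ j : Fin k, InSkewBForm G j)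

/-- `G` is the direct sum of `G₁` (on top) and `G₂` (below), where `G₁` and `G₂` use
disjoint sets of indeterminates, embedded into `Fin k` via `ι₁` and `ι₂`. -/
def IsDirectSumOf {p n k p₁ p₂ k₁ k₂ : ℕ} (hp : p = p₁ + p₂)
    (G : Matrix (Fin p) (Fin n) (CODEntry k))
    (G₁ : Matrix (Fin p₁) (Fin n) (CODEntry k₁))
    (G₂ : Matrix (Fin p₂) (Fin n) (CODEntry k₂))
    (ι₁ : Fin k₁ ↪ Fin k) (ι₂ : Fin k₂ ↪ Fin k) : Prop :=
  k = k₁ + k₂ ∧ (∀ a b, ι₁ a ≠ ι₂ b) ∧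
  ∀ (r : Fin p) (c : Fin n),
    if h : (r : ℕ) < p₁ then G r c = (G₁ ⟨(r : ℕ), h⟩ c).mapIdx (fun i => ι₁ i)
    else G r c = (G₂ ⟨(r : ℕ) - p₁, by have := r.isLt; omega⟩ c).mapIdx (fun i => ι₂ i)

/-- A COD is decomposable if, after a permutation of its rows, it can be expressed as
the direct sum of two (nonempty) CODs on disjoint sets of indeterminates. -/
def IsDecomposable {p n k : ℕ} (G : Matrix (Fin p) (Fin n) (CODEntry k)) : Prop :=
  ∃ (σ : Equiv.Perm (Fin p)) (p₁ p₂ k₁ k₂ : ℕ) (hp : p = p₁ + p₂)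
    (G₁ : Matrix (Fin p₁) (Fin n) (CODEntry k₁))
    (G₂ : Matrix (Fin p₂) (Fin n) (CODEntry k₂))
    (ι₁ : Fin k₁ ↪ Fin k) (ι₂ : Fin k₂ ↪ Fin k),
    0 < p₁ ∧ 0 < p₂ ∧ IsCOD G₁ ∧ IsCOD G₂ ∧
    IsDirectSumOf hp (fun r c => G (σ r) c) G₁ G₂ ι₁ ι₂

/-- Rows `r₁` and `r₂` of `G` form a pair: if `r₁` is `(α₁,…,α_m, β₁,…,β_m)` then `r₂`
is `(±β₁^*,…,±β_m^*, ±α₁^*,…,±α_m^*)` (the signs may differ from entry to entry). -/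
def IsPairRows {p m k : ℕ} (G : Matrix (Fin p) (Fin (m + m)) (CODEntry k))
    (r₁ r₂ : Fin p) : Prop :=
  ∀ s : Fin m,
    (∃ b : Bool, G r₂ (Fin.castAdd m s) = CODEntry.negIf b ((G r₁ (Fin.natAdd m s)).conj)) ∧
    (∃ b : Bool, G r₂ (Fin.natAdd m s) = CODEntry.negIf b ((G r₁ (Fin.castAdd m s)).conj))

/-!
Evaluating `Gᴴ G = (∑ |z_j|²) I` at `z = Pi.single a 1` shows that in a COD every variable
occurs at most once in each column. The equivalence operations that fix the columns and the
variable names only move rows and change signs or conjugate variables, so they keep the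
variable of every cell and reflect pairing. A row `r` of a BCOD carries some `z_a` in some
column; in the `B_a` form the only row with `z_a` in that column is a diagonal row of the
block, and skew-symmetry of `M_a` makes it paired with the opposite diagonal row. A partner of
`r` carries the variables of `r` in the swapped columns, so it is unique, and the partners form
a fixed-point-free involution.
-/

namespace CODEntry

variable {k : ℕ}

@[simp] lemma neg_neg (x : CODEntry k) : x.neg.neg = x := by cases x <;> simp [neg]

@[simp] lemma conj_conj (x : CODEntry k) : x.conj.conj = x := by cases x <;> simp [conj]

lemma conj_neg (x : CODEntry k) : x.neg.conj = x.conj.neg := by cases x <;> simp [neg, conj]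

@[simp] lemma negIf_false (x : CODEntry k) : negIf false x = x := rfl

@[simp] lemma negIf_negIf (a b : Bool) (x : CODEntry k) :
    negIf a (negIf b x) = negIf (xor a b) x := by
  cases a <;> cases b <;> simp [negIf]

lemma conj_negIf (b : Bool) (x : CODEntry k) : (negIf b x).conj = negIf b x.conj := by
  cases b <;> simp [negIf, conj_neg]

lemma negIf_eq_iff {b : Bool} {x y : CODEntry k} : negIf b x = y ↔ x = negIf b y := by
  cases b
  · rfl
  · simp only [negIf, ↓reduceIte]
    exact ⟨fun h => by rw [← h, neg_neg], fun h => by rw [h, neg_neg]⟩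

@[simp] lemma index_neg (x : CODEntry k) : x.neg.index = x.index := by
  cases x <;> rfl

@[simp] lemma index_conj (x : CODEntry k) : x.conj.index = x.index := by
  cases x <;> rfl

@[simp] lemma index_negIf (b : Bool) (x : CODEntry k) : (negIf b x).index = x.index := by
  cases b <;> simp [negIf]

lemma exists_index_eq_some {x : CODEntry k} (hx : x ≠ zero) : ∃ a, x.index = some a := by
  cases x with
  | zero => exact absurd rfl hx
  | var s c a => exact ⟨a, rfl⟩

lemma negVar_neg (j : Fin k) (x : CODEntry k) : x.neg.negVar j = (x.negVar j).neg := by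
  cases x with
  | zero => rfl
  | var s c i => by_cases h : i = j <;> simp [neg, negVar, h]

lemma negVar_conj (j : Fin k) (x : CODEntry k) : x.conj.negVar j = (x.negVar j).conj := by
  cases x with
  | zero => rfl
  | var s c i => by_cases h : i = j <;> simp [conj, negVar, h]

lemma negVar_involutive (j : Fin k) : Function.Involutive (negVar (k := k) j) := by
  intro x
  cases x with
  | zero => rfl
  | var s c i => by_cases h : i = j <;> simp [negVar, h]

@[simp] lemma index_negVar (j : Fin k) (x : CODEntry k) : (x.negVar j).index = x.index := by
  cases x with
  | zero => rfl
  | var s c i => by_cases h : i = j <;> simp [negVar, index, h]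

lemma conjVar_neg (j : Fin k) (x : CODEntry k) : x.neg.conjVar j = (x.conjVar j).neg := by
  cases x with
  | zero => rfl
  | var s c i => by_cases h : i = j <;> simp [neg, conjVar, h]

lemma conjVar_conj (j : Fin k) (x : CODEntry k) : x.conj.conjVar j = (x.conjVar j).conj := by
  cases x with
  | zero => rfl
  | var s c i => by_cases h : i = j <;> simp [conj, conjVar, h]

lemma conjVar_involutive (j : Fin k) : Function.Involutive (conjVar (k := k) j) := by
  intro x
  cases x with
  | zero => rfl
  | var s c i => by_cases h : i = j <;> simp [conjVar, h]

@[simp] lemma index_conjVar (j : Fin k) (x : CODEntry k) : (x.conjVar j).index = x.index := by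
  cases x with
  | zero => rfl
  | var s c i => by_cases h : i = j <;> simp [conjVar, index, h]

lemma normSq_eval_single (a : Fin k) (x : CODEntry k) :
    star (x.eval (Pi.single a 1)) * x.eval (Pi.single a 1) =
      if x.index = some a then 1 else 0 := by
  cases x with
  | zero => simp [eval, index]
  | var s c i =>
    by_cases h : i = a
    · subst h; cases s <;> cases c <;> simp [eval, index]
    · cases s <;> cases c <;> simp [eval, index, h]

end CODEntry

section Pairs

variable {p m k : ℕ} {G : Matrix (Fin p) (Fin (m + m)) (CODEntry k)}

lemma IsPairRows.symm {r₁ r₂ : Fin p} (h : IsPairRows G r₁ r₂) : IsPairRows G r₂ r₁ := by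
  intro s
  obtain ⟨⟨b₁, e₁⟩, ⟨b₂, e₂⟩⟩ := h s
  refine ⟨⟨b₂, ?_⟩, ⟨b₁, ?_⟩⟩
  · rw [e₂, CODEntry.conj_negIf, CODEntry.conj_conj, CODEntry.negIf_negIf, Bool.xor_self,
      CODEntry.negIf_false]
  · rw [e₁, CODEntry.conj_negIf, CODEntry.conj_conj, CODEntry.negIf_negIf, Bool.xor_self,
      CODEntry.negIf_false]

lemma IsPairRows.index_castAdd {r₁ r₂ : Fin p} (h : IsPairRows G r₁ r₂) (s : Fin m) :
    (G r₂ (Fin.castAdd m s)).index = (G r₁ (Fin.natAdd m s)).index := by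
  obtain ⟨b, e⟩ := (h s).1
  rw [e, CODEntry.index_negIf, CODEntry.index_conj]

lemma IsPairRows.index_natAdd {r₁ r₂ : Fin p} (h : IsPairRows G r₁ r₂) (s : Fin m) :
    (G r₂ (Fin.natAdd m s)).index = (G r₁ (Fin.castAdd m s)).index := by
  obtain ⟨b, e⟩ := (h s).2
  rw [e, CODEntry.index_negIf, CODEntry.index_conj]

end Pairs

structure IsRowTransport {p m k : ℕ} (G H : Matrix (Fin p) (Fin (m + m)) (CODEntry k))
    (τ : Equiv.Perm (Fin p)) : Prop where
  index_eq : ∀ r c, (H (τ r) c).index = (G r c).index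
  isPairRows : ∀ r₁ r₂, IsPairRows H (τ r₁) (τ r₂) → IsPairRows G r₁ r₂

namespace IsRowTransport

variable {p m k : ℕ} {G H K : Matrix (Fin p) (Fin (m + m)) (CODEntry k)}

lemma refl (G : Matrix (Fin p) (Fin (m + m)) (CODEntry k)) : IsRowTransport G G 1 :=
  ⟨fun _ _ => rfl, fun _ _ h => h⟩

lemma trans {τ τ' : Equiv.Perm (Fin p)} (h : IsRowTransport G H τ)
    (h' : IsRowTransport H K τ') : IsRowTransport G K (τ.trans τ') :=
  ⟨fun r c => (h'.index_eq (τ r) c).trans (h.index_eq r c),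
    fun r₁ r₂ hK => h.isPairRows r₁ r₂ (h'.isPairRows (τ r₁) (τ r₂) hK)⟩

lemma of_eq_negIf_map (φ : CODEntry k → CODEntry k) (hφ : Function.Injective φ)
    (hneg : ∀ x, φ x.neg = (φ x).neg) (hconj : ∀ x, φ x.conj = (φ x).conj)
    (hindex : ∀ x, (φ x).index = x.index) (τ : Equiv.Perm (Fin p))
    (b : Fin p → Fin (m + m) → Bool)
    (h : ∀ r c, H (τ r) c = CODEntry.negIf (b r c) (φ (G r c))) : IsRowTransport G H τ := by
  have hnegIf : ∀ b x, φ (CODEntry.negIf b x) = CODEntry.negIf b (φ x) := by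
    intro b x; cases b <;> simp [CODEntry.negIf, hneg]
  have transfer : ∀ {b₁ b₂ b x y},
      CODEntry.negIf b₂ (φ y) = CODEntry.negIf b (CODEntry.negIf b₁ (φ x)).conj →
        ∃ b', y = CODEntry.negIf b' x.conj := by
    intro b₁ b₂ b x y e
    rw [CODEntry.conj_negIf, CODEntry.negIf_negIf, ← hconj, CODEntry.negIf_eq_iff,
      CODEntry.negIf_negIf, ← hnegIf] at e
    exact ⟨_, hφ e⟩
  refine ⟨fun r c => by rw [h, CODEntry.index_negIf, hindex], fun r₁ r₂ hH s => ?_⟩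
  obtain ⟨⟨b₁, e₁⟩, ⟨b₂, e₂⟩⟩ := hH s
  rw [h, h] at e₁ e₂
  exact ⟨transfer e₁, transfer e₂⟩

end IsRowTransport

namespace EquivOp

variable {p m k : ℕ}

lemma isRowTransport_apply (G : Matrix (Fin p) (Fin (m + m)) (CODEntry k)) :
    ∀ op : EquivOp p (m + m) k, ¬ op.IsColPerm → ¬ op.IsVarRename →
      ∃ τ, IsRowTransport G (op.apply G) τ
  | rowPerm σ, _, _ => ⟨σ⁻¹, .of_eq_negIf_map id Function.injective_id (fun _ => rfl)
      (fun _ => rfl) (fun _ => rfl) σ⁻¹ (fun _ _ => false)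
      (fun r c => by simp [apply])⟩
  | rowNeg r₀, _, _ => ⟨1, .of_eq_negIf_map id Function.injective_id (fun _ => rfl)
      (fun _ => rfl) (fun _ => rfl) 1 (fun r _ => decide (r = r₀))
      (fun r c => by by_cases hr : r = r₀ <;> simp [apply, CODEntry.negIf, hr])⟩
  | colPerm _, h, _ => absurd trivial h
  | colNeg c₀, _, _ => ⟨1, .of_eq_negIf_map id Function.injective_id (fun _ => rfl)
      (fun _ => rfl) (fun _ => rfl) 1 (fun _ c => decide (c = c₀))
      (fun r c => by by_cases hc : c = c₀ <;> simp [apply, CODEntry.negIf, hc])⟩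
  | varRename _, _, h => absurd trivial h
  | varNeg j, _, _ => ⟨1, .of_eq_negIf_map (CODEntry.negVar j)
      (CODEntry.negVar_involutive j).injective (CODEntry.negVar_neg j)
      (CODEntry.negVar_conj j) (CODEntry.index_negVar j) 1 (fun _ _ => false)
      (fun _ _ => rfl)⟩
  | varConj j, _, _ => ⟨1, .of_eq_negIf_map (CODEntry.conjVar j)
      (CODEntry.conjVar_involutive j).injective (CODEntry.conjVar_neg j)
      (CODEntry.conjVar_conj j) (CODEntry.index_conjVar j) 1 (fun _ _ => false)
      (fun _ _ => rfl)⟩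

end EquivOp

lemma exists_isRowTransport_applyOps {p m k : ℕ} (ops : List (EquivOp p (m + m) k))
    (hops : ∀ op ∈ ops, ¬ op.IsColPerm ∧ ¬ op.IsVarRename)
    (G : Matrix (Fin p) (Fin (m + m)) (CODEntry k)) :
    ∃ τ, IsRowTransport G (applyOps G ops) τ := by
  induction ops generalizing G with
  | nil => exact ⟨1, .refl G⟩
  | cons op ops ih =>
    obtain ⟨hcol, hvar⟩ := hops op List.mem_cons_self
    obtain ⟨τ, hτ⟩ := op.isRowTransport_apply G hcol hvar
    obtain ⟨τ', hτ'⟩ := ih (fun op' h => hops op' (List.mem_cons_of_mem _ h)) (op.apply G)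
    exact ⟨τ.trans τ', hτ.trans hτ'⟩

def VarsDistinctInColumns {p n k : ℕ} (G : Matrix (Fin p) (Fin n) (CODEntry k)) : Prop :=
  ∀ c a r₁ r₂, (G r₁ c).index = some a → (G r₂ c).index = some a → r₁ = r₂

lemma IsCOD.existsUnique_index_eq {p n k : ℕ} {G : Matrix (Fin p) (Fin n) (CODEntry k)}
    (hG : IsCOD G) (c : Fin n) (a : Fin k) : ∃! r, (G r c).index = some a := by
  classical
  have h := congrFun (congrFun (hG (Pi.single a 1)) c) c
  simp only [Matrix.mul_apply, Matrix.conjTranspose_apply, Matrix.map_apply, Matrix.smul_apply,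
    Matrix.one_apply_eq, smul_eq_mul, mul_one, CODEntry.normSq_eval_single, Finset.sum_boole] at h
  have hsum : ∑ j, Complex.normSq ((Pi.single a 1 : Fin k → ℂ) j) = 1 := by
    rw [Finset.sum_eq_single a (fun j _ hj => by simp [hj]) (by simp)]
    simp
  rw [hsum] at h
  exact (Fintype.existsUnique_iff_card_one _).mpr (by exact_mod_cast h)

lemma IsCOD.varsDistinctInColumns {p n k : ℕ} {G : Matrix (Fin p) (Fin n) (CODEntry k)}
    (hG : IsCOD G) : VarsDistinctInColumns G :=
  fun c a _ _ h₁ h₂ => (hG.existsUnique_index_eq c a).unique h₁ h₂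

lemma IsRowTransport.varsDistinctInColumns {p m k : ℕ}
    {G H : Matrix (Fin p) (Fin (m + m)) (CODEntry k)} {τ : Equiv.Perm (Fin p)}
    (h : IsRowTransport G H τ) (hG : VarsDistinctInColumns G) : VarsDistinctInColumns H := by
  intro c a r₁ r₂ h₁ h₂
  rw [← τ.apply_symm_apply r₁, h.index_eq] at h₁
  rw [← τ.apply_symm_apply r₂, h.index_eq] at h₂
  exact τ.symm.injective (hG c a _ _ h₁ h₂)

namespace ContainsSkewBFormWith

variable {p m k : ℕ} {H : Matrix (Fin p) (Fin (m + m)) (CODEntry k)} {a : Fin k}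
  {f : Fin (m + m) ↪ Fin p}

lemma isPairRows (hB : ContainsSkewBFormWith H a f) (s : Fin m) :
    IsPairRows H (f (Fin.castAdd m s)) (f (Fin.natAdd m s)) := by
  obtain ⟨⟨h11, h22, h21⟩, hskew⟩ := hB
  refine fun t => ⟨⟨false, ?_⟩, ⟨false, ?_⟩⟩
  · rw [h21 s t, hskew s t, CODEntry.conj_neg, CODEntry.neg_neg, CODEntry.negIf_false]
  · rw [h22 s t, h11 s t, CODEntry.negIf_false]
    split_ifs <;> rfl

lemma exists_isPairRows (hB : ContainsSkewBFormWith H a f) (hH : VarsDistinctInColumns H)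
    {r : Fin p} {c : Fin (m + m)} (hr : (H r c).index = some a) :
    ∃ r', r' ≠ r ∧ IsPairRows H r r' := by
  have hne : ∀ s, f (Fin.castAdd m s) ≠ f (Fin.natAdd m s) := fun s h =>
    s.pos.ne' (by simpa [Fin.ext_iff] using f.injective h)
  induction c using Fin.addCases with
  | left s =>
    have hrow : r = f (Fin.castAdd m s) :=
      hH _ a _ _ hr (by rw [hB.1.1 s s]; simp [CODEntry.index])
    subst hrow
    exact ⟨_, (hne s).symm, hB.isPairRows s⟩
  | right s =>
    have hrow : r = f (Fin.natAdd m s) :=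
      hH _ a _ _ hr (by rw [hB.1.2.1 s s]; simp [CODEntry.index])
    subst hrow
    exact ⟨_, hne s, (hB.isPairRows s).symm⟩

end ContainsSkewBFormWith

section Partner

variable {p m k : ℕ} {G : Matrix (Fin p) (Fin (m + m)) (CODEntry k)}

lemma exists_isPairRows_of_index_eq (hG : IsCOD G) {a : Fin k} (hB : InSkewBForm G a)
    {r : Fin p} {c : Fin (m + m)} (hr : (G r c).index = some a) :
    ∃ r', r' ≠ r ∧ IsPairRows G r r' := by
  obtain ⟨ops, hops, f, hBf⟩ := hB
  obtain ⟨τ, hτ⟩ := exists_isRowTransport_applyOps ops hops G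
  obtain ⟨r', hne, hpair⟩ :=
    hBf.exists_isPairRows (hτ.varsDistinctInColumns hG.varsDistinctInColumns)
      (by rw [hτ.index_eq]; exact hr)
  refine ⟨τ.symm r', fun h => hne (by rw [← h, Equiv.apply_symm_apply]), hτ.isPairRows _ _ ?_⟩
  rwa [Equiv.apply_symm_apply]

lemma IsPairRows.eq_of_index_eq (hG : VarsDistinctInColumns G) {r r₁ r₂ : Fin p}
    {c : Fin (m + m)} {a : Fin k} (hr : (G r c).index = some a) (h₁ : IsPairRows G r r₁)
    (h₂ : IsPairRows G r r₂) : r₁ = r₂ := by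
  induction c using Fin.addCases with
  | left s => exact hG _ a _ _ (by rw [h₁.index_natAdd, hr]) (by rw [h₂.index_natAdd, hr])
  | right s => exact hG _ a _ _ (by rw [h₁.index_castAdd, hr]) (by rw [h₂.index_castAdd, hr])

lemma exists_index_eq_some_of_card_filter_zero (hm : 1 ≤ m) {r : Fin p}
    (hzero : (Finset.univ.filter fun c => G r c = CODEntry.zero).card = m) :
    ∃ c a, (G r c).index = some a := by
  by_contra! hnone
  have hall : ∀ c, G r c = CODEntry.zero := fun c => by
    by_contra hc
    obtain ⟨a, ha⟩ := CODEntry.exists_index_eq_some hc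
    exact hnone c a ha
  rw [Finset.filter_true_of_mem (fun c _ => hall c), Finset.card_univ, Fintype.card_fin] at hzero
  omega

end Partner

theorem bcod_rows_in_pairs_general {p m k : ℕ} (hm : 1 ≤ m)
    (G : Matrix (Fin p) (Fin (m + m)) (CODEntry k)) (hG : IsBCOD G) :
    ∃ σ : Equiv.Perm (Fin p),
      (∀ r, σ r ≠ r) ∧ (∀ r, σ (σ r) = r) ∧ ∀ r, IsPairRows G r (σ r) := by
  obtain ⟨hCOD, hzero, -, hB⟩ := hG
  have hvar : ∀ r, ∃ c a, (G r c).index = some a :=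
    fun r => exists_index_eq_some_of_card_filter_zero hm (hzero r)
  have partner : ∀ r, ∃ r', r' ≠ r ∧ IsPairRows G r r' := fun r => by
    obtain ⟨c, a, ha⟩ := hvar r
    exact exists_isPairRows_of_index_eq hCOD (hB a) ha
  choose σ hσ_ne hσ_pair using partner
  have hσ : Function.Involutive σ := fun r => by
    obtain ⟨c, a, ha⟩ := hvar (σ r)
    exact (hσ_pair (σ r)).eq_of_index_eq hCOD.varsDistinctInColumns ha (hσ_pair r).symm
  exact ⟨hσ.toPerm σ, hσ_ne, hσ, hσ_pair⟩

/-- the `p` rows of a BCOD in `B_i` form can be partitioned into `p / 2`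
pairs (given by a fixed-point-free involution `σ` of the rows); in particular every row
belongs to a pair. -/
theorem bcod_rows_in_pairs {p m k : ℕ} (hm : 1 ≤ m)
    (G : Matrix (Fin p) (Fin (m + m)) (CODEntry k)) (hG : IsBCOD G)
    (i : Fin k) (hi : InBForm G i) :
    ∃ σ : Equiv.Perm (Fin p),
      (∀ r, σ r ≠ r) ∧ (∀ r, σ (σ r) = r) ∧ ∀ r, IsPairRows G r (σ r) :=
  bcod_rows_in_pairs_general hm G hG
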